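/- arXiv:1805.00112 — 2 statements merged into one kernel-verified Lean document; each statement's English description precedes it below -/
import Mathlib

section
/- Let s₀ < s₁ < s₂ in [0,T], let ν₁(·):[s₀,s₁]→𝒫¹(𝕋^d×ℝ) and ν₂(·):[s₁,s₂]→𝒫¹(𝕋^d×ℝ) both solve the MFDI, and assume ν₁(s₁) = ν₂(s₁). Then the flow ν(·):[s₀,s₂]→𝒫¹(𝕋^d×ℝ) defined by ν(t) = ν₁(t) for t ∈ [s₀,s₁] and ν(t) = ν₂(t) for t ∈ [s₁,s₂] also solves the MFDI on [s₀,s₂]. -/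
open MeasureTheory Set Filter Topology

noncomputable section

/-- The `d`-dimensional torus `ℝ^d/ℤ^d`. -/
abbrev Torus (d : ℕ) := Fin d → AddCircle (1 : ℝ)

/-- The extended phase space `𝕋^d × ℝ`. -/
abbrev ExtSp (d : ℕ) := Torus d × ℝ

/-- Natural projection `ℝ^d → 𝕋^d`. -/
def projT {d : ℕ} (v : Fin d → ℝ) : Torus d := fun i => (v i : AddCircle (1 : ℝ))

/-- The 1-Wasserstein (Kantorovich–Rubinstein) distance, via the dual formula. -/
def W1 {X : Type*} [MeasurableSpace X] [PseudoMetricSpace X] (μ ν : Measure X) : ℝ :=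
  sSup {c : ℝ | ∃ φ : X → ℝ, LipschitzWith 1 φ ∧ c = (∫ x, φ x ∂μ) - ∫ x, φ x ∂ν}

/-- A measure has a finite first moment. -/
def FiniteFirstMoment {X : Type*} [MeasurableSpace X] [PseudoMetricSpace X]
    (μ : Measure X) : Prop :=
  ∃ x₀ : X, Integrable (fun x => dist x x₀) μ

/-- Support of a measure. -/
def msupport {X : Type*} [TopologicalSpace X] [MeasurableSpace X] (μ : Measure X) : Set X :=
  {x | ∀ O : Set X, IsOpen O → x ∈ O → μ O ≠ 0}

/-- `K`-Lipschitz real valued functions. -/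
def IsLip {X : Type*} [PseudoMetricSpace X] (K : ℝ) (φ : X → ℝ) : Prop :=
  ∀ x y, |φ x - φ y| ≤ K * dist x y

instance ContinuousMap.instMeasurableSpace {X Y : Type*} [TopologicalSpace X]
    [TopologicalSpace Y] : MeasurableSpace C(X, Y) := borel _

/-- The space of continuous motions on `[s,r]` with values in the extended phase space. -/
abbrev Traj (d : ℕ) (s r : ℝ) := C(Icc s r, ExtSp d)

/-- Evaluation of a motion at time `t`. -/
def evT {d : ℕ} {s r : ℝ} (hsr : s ≤ r) (t : ℝ) (w : Traj d s r) : ExtSp d :=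
  w (projIcc s r hsr t)

/-- The data of a deterministic mean field game satisfying conditions (M1)–(M5). -/
structure MFGData (d : ℕ) (U : Type*) [MetricSpace U] [CompactSpace U] where
  /-- time horizon -/
  T : ℝ
  T_pos : 0 < T
  /-- drift -/
  f : ℝ → Torus d → Measure (Torus d) → U → (Fin d → ℝ)
  /-- running reward -/
  g : ℝ → Torus d → Measure (Torus d) → U → ℝ
  /-- modulus of continuity in time -/
  alpha : ℝ → ℝ
  L : ℝ
  R : ℝ
  alpha_nonneg : ∀ δ, 0 ≤ alpha δ
  alpha_lim : Tendsto alpha (𝓝 0) (𝓝 0)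
  f_cont : ∀ t x m, Continuous (f t x m)
  g_cont : ∀ t x m, Continuous (g t x m)
  f_time : ∀ t t' x m u, ‖f t x m u - f t' x m u‖ ≤ alpha (t - t')
  g_time : ∀ t t' x m u, |g t x m u - g t' x m u| ≤ alpha (t - t')
  f_lip : ∀ t x x' m m' u, ‖f t x m u - f t x' m' u‖ ≤ L * (dist x x' + W1 m m')
  g_lip : ∀ t x x' m m' u, |g t x m u - g t x' m' u| ≤ L * (dist x x' + W1 m m')
  f_bdd : ∀ t x m u, ‖f t x m u‖ ≤ R
  g_bdd : ∀ t x m u, |g t x m u| ≤ R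

variable {d : ℕ} {U : Type*} [MetricSpace U] [CompactSpace U]

/-- `F(t,x,m) = co{(f(t,x,m,u),g(t,x,m,u)) : u ∈ U}`. -/
def Fset (D : MFGData d U) (t : ℝ) (x : Torus d) (m : Measure (Torus d)) :
    Set ((Fin d → ℝ) × ℝ) :=
  convexHull ℝ (Set.range fun u => (D.f t x m u, D.g t x m u))

/-- `Sol(r,s,y,m(·))`: solutions of the differential inclusion
`(ẋ(t),ż(t)) ∈ F(t,x(t),m(t))` on `[s,r]` with `x(s) = y`, in integral form. -/
def Sol (D : MFGData d U) {s r : ℝ} (hsr : s ≤ r) (y : Torus d)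
    (m : ℝ → Measure (Torus d)) : Set (Traj d s r) :=
  {w | (evT hsr s w).1 = y ∧
    ∃ v : ℝ → (Fin d → ℝ) × ℝ,
      IntegrableOn v (Icc s r) ∧
      (∀ᵐ t ∂(volume.restrict (Icc s r)), v t ∈ Fset D t (evT hsr t w).1 (m t)) ∧
      ∀ t ∈ Icc s r,
        evT hsr t w = ((evT hsr s w).1 + projT (∫ θ in s..t, (v θ).1),
                       (evT hsr s w).2 + ∫ θ in s..t, (v θ).2)}

/-- `SOL(r,s,m(·))`: all solutions of the differential inclusion on `[s,r]`. -/
def SOLset (D : MFGData d U) {s r : ℝ} (hsr : s ≤ r)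
    (m : ℝ → Measure (Torus d)) : Set (Traj d s r) :=
  ⋃ y : Torus d, Sol D hsr y m

/-- A flow of probabilities `ν(·)` solves the mean field type differential inclusion
`(d/dt) ν(t) ∈ ⟨F(t,·,ν(t)),∇⟩ ν(t)` on `[s,r]`. -/
def SolvesMFDI (D : MFGData d U) {s r : ℝ} (hsr : s ≤ r)
    (ν : ℝ → Measure (ExtSp d)) : Prop :=
  ∃ χ : Measure (Traj d s r), IsProbabilityMeasure χ ∧ FiniteFirstMoment χ ∧
    (∀ t ∈ Icc s r, ν t = χ.map (evT hsr t)) ∧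
    msupport χ ⊆ SOLset D hsr fun t => (ν t).map Prod.fst

/-- The pairing `[φ,ν] = ∫ (φ(x)+z) ν(d(x,z))`. -/
def pairPhi {d : ℕ} (φ : Torus d → ℝ) (ν : Measure (ExtSp d)) : ℝ :=
  ∫ w, (φ w.1 + w.2) ∂ν

/-- The lifting `m̂` of `m ∈ 𝒫¹(𝕋^d)` to `𝒫¹(𝕋^d×ℝ)`. -/
def mhat {d : ℕ} (m : Measure (Torus d)) : Measure (ExtSp d) :=
  m.map fun x => (x, (0 : ℝ))

/-- The Bellman operator `B^{s,r}_{m(·)}`. -/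
def Bop (D : MFGData d U) {s r : ℝ} (hsr : s ≤ r) (m : ℝ → Measure (Torus d))
    (ψ : Torus d → ℝ) (y : Torus d) : ℝ :=
  sSup ((fun w : Traj d s r =>
      ψ (evT hsr r w).1 + (evT hsr r w).2 - (evT hsr s w).2) '' Sol D hsr y m)

/-- The Bellman operator `A^{s,r}_m` of the "frozen" dynamics. -/
def Aop (D : MFGData d U) (s r : ℝ) (m : Measure (Torus d)) (φ : Torus d → ℝ)
    (x : Torus d) : ℝ :=
  sSup {c : ℝ | ∃ ab ∈ Fset D s x m, c = φ (x + projT ((r - s) • ab.1)) + (r - s) * ab.2}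


/-- Mean field game data together with a terminal reward `σ`. -/
structure MFGDataS (d : ℕ) (U : Type*) [MetricSpace U] [CompactSpace U]
    extends MFGData d U where
  /-- terminal reward -/
  sigma : Torus d → Measure (Torus d) → ℝ
  kappa : ℝ
  sigma_lip : ∀ x x' m, |sigma x m - sigma x' m| ≤ kappa * dist x x'
  sigma_cont : ∀ x m, IsProbabilityMeasure m → ∀ ε > 0, ∃ δ > 0,
      ∀ m' : Measure (Torus d), IsProbabilityMeasure m' → W1 m m' < δ →
        |sigma x m' - sigma x m| < ε

variable {d : ℕ} {U : Type*} [MetricSpace U] [CompactSpace U]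

/-- `(V,m(·))` is a solution of the mean field game on `[t₀,T]` (Definition 2.2). -/
def IsMFGSol (D : MFGDataS d U) (t₀ : ℝ) (ht : t₀ ≤ D.T)
    (V : ℝ → Torus d → ℝ) (m : ℝ → Measure (Torus d)) : Prop :=
  ContinuousOn (fun p : ℝ × Torus d => V p.1 p.2) (Icc t₀ D.T ×ˢ univ) ∧
  ∃ χ : Measure (Traj d t₀ D.T), IsProbabilityMeasure χ ∧ FiniteFirstMoment χ ∧
    (∀ t ∈ Icc t₀ D.T, m t = χ.map fun w => (evT ht t w).1) ∧
    (∀ s, ∀ hs : s ∈ Icc t₀ D.T, ∀ y : Torus d,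
      V s y = Bop D.toMFGData hs.2 m (fun x => D.sigma x (m D.T)) y) ∧
    msupport χ ⊆ SOLset D.toMFGData ht m ∧
    (∀ s ∈ Icc t₀ D.T, ∀ r ∈ Icc t₀ D.T, s < r → ∀ w ∈ msupport χ,
      V s (evT ht s w).1 + (evT ht s w).2 = V r (evT ht r w).1 + (evT ht r w).2)

/-- Upper semicontinuity (sequentially closed graph) of a multifunction
`𝒱 : [0,T]×𝒫¹(𝕋^d) ⇉ C(𝕋^d)`. -/
def USC (T : ℝ) (V : ℝ → Measure (Torus d) → Set C(Torus d, ℝ)) : Prop :=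
  ∀ (t : ℝ) (m : Measure (Torus d)) (tn : ℕ → ℝ) (mn : ℕ → Measure (Torus d))
    (φn : ℕ → C(Torus d, ℝ)) (φ : C(Torus d, ℝ)),
    t ∈ Icc 0 T → (∀ n, tn n ∈ Icc 0 T) →
    IsProbabilityMeasure m → (∀ n, IsProbabilityMeasure (mn n)) →
    Tendsto tn atTop (𝓝 t) → Tendsto (fun n => W1 (mn n) m) atTop (𝓝 0) →
    (∀ n, φn n ∈ V (tn n) (mn n)) → Tendsto φn atTop (𝓝 φ) →
    φ ∈ V t m

/-- `𝒱` is a value multifunction of the mean field game (Definition 4.1). -/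
def IsValueMultifunction (D : MFGDataS d U)
    (𝒱 : ℝ → Measure (Torus d) → Set C(Torus d, ℝ)) : Prop :=
  USC D.T 𝒱 ∧
  ∀ t₀, ∀ ht : t₀ ∈ Icc 0 D.T, ∀ m₀ : Measure (Torus d), IsProbabilityMeasure m₀ →
    ∀ φ ∈ 𝒱 t₀ m₀, ∃ (V : ℝ → Torus d → ℝ) (m : ℝ → Measure (Torus d)),
      IsMFGSol D t₀ ht.2 V m ∧ (∀ x, V t₀ x = φ x) ∧ m t₀ = m₀

/-- The mean field game dynamics `Ψ^{r,s}` (Definition 4.2). -/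
def Psi (D : MFGData d U) {s r : ℝ} (hsr : s ≤ r)
    (m : Measure (Torus d)) (φ : C(Torus d, ℝ)) :
    Set (Measure (Torus d) × C(Torus d, ℝ)) :=
  {p | ∃ ν : ℝ → Measure (ExtSp d),
      SolvesMFDI D hsr ν ∧
      (ν s).map Prod.fst = m ∧ (ν r).map Prod.fst = p.1 ∧
      (∀ y : Torus d, φ y = Bop D hsr (fun t => (ν t).map Prod.fst) (fun x => p.2 x) y) ∧
      pairPhi (fun x => p.2 x) (ν r) ≥ pairPhi (fun x => φ x) (ν s)}

/-- `𝒱` is viable with respect to the mean field game dynamics (Definition 4.3). -/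
def Viable (D : MFGData d U) (𝒱 : ℝ → Measure (Torus d) → Set C(Torus d, ℝ)) : Prop :=
  ∀ s r, s ∈ Icc 0 D.T → r ∈ Icc 0 D.T → ∀ hsr : s ≤ r,
    ∀ m : Measure (Torus d), IsProbabilityMeasure m → ∀ φ ∈ 𝒱 s m,
      ∃ (μ : Measure (Torus d)) (ψ : C(Torus d, ℝ)),
        (μ, ψ) ∈ Psi D hsr m φ ∧ ψ ∈ 𝒱 r μ

/-- `BL_{M,C}`: continuous functions bounded by `M` and `C`-Lipschitz. -/
def BL (d : ℕ) (M C : ℝ) : Set C(Torus d, ℝ) :=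
  {φ | (∀ x, |φ x| ≤ M) ∧ IsLip C fun x => φ x}

/-- `ℒ^c(m)`: probabilities on `𝕋^d×ℝ^{d+1}` with marginal `m` on `𝕋^d`,
supported in `𝕋^d × B_c × [-c,c]`. -/
def Lc (c : ℝ) (m : Measure (Torus d)) :
    Set (Measure (Torus d × ((Fin d → ℝ) × ℝ))) :=
  {β | IsProbabilityMeasure β ∧ β.map Prod.fst = m ∧
    msupport β ⊆ univ ×ˢ (Metric.closedBall 0 c ×ˢ Icc (-c) c)}

/-- `ℒ^c_*(ν)`: probabilities on `(𝕋^d×ℝ)×ℝ^{d+1}` with marginal `ν` on `𝕋^d×ℝ`,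
supported in `(𝕋^d×ℝ) × B_c × [-c,c]`. -/
def Lcstar {d : ℕ} (c : ℝ) (ν : Measure (ExtSp d)) :
    Set (Measure (ExtSp d × ((Fin d → ℝ) × ℝ))) :=
  {γ | IsProbabilityMeasure γ ∧ γ.map Prod.fst = ν ∧
    msupport γ ⊆ univ ×ˢ (Metric.closedBall 0 c ×ˢ Icc (-c) c)}

/-- `Θ^τ(x,a,b) = (x+τa, τb)`. -/
def Theta {d : ℕ} (τ : ℝ) (p : Torus d × ((Fin d → ℝ) × ℝ)) : ExtSp d :=
  (p.1 + projT (τ • p.2.1), τ * p.2.2)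

/-- `Ξ^τ(w,v) = w + τv`. -/
def Xi {d : ℕ} (τ : ℝ) (p : ExtSp d × ((Fin d → ℝ) × ℝ)) : ExtSp d :=
  (p.1.1 + projT (τ • p.2.1), p.1.2 + τ * p.2.2)

/-- The set-valued derivative `𝒟^c_F 𝒱(t,m,φ)` (Definition 5.1). -/
def Dder (D : MFGData d U) (𝒱 : ℝ → Measure (Torus d) → Set C(Torus d, ℝ))
    (c : ℝ) (t : ℝ) (m : Measure (Torus d)) (φ : C(Torus d, ℝ)) :
    Set (Measure (Torus d × ((Fin d → ℝ) × ℝ))) :=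
  {β | β ∈ Lc c m ∧
    (∫ p, Metric.infDist p.2 (Fset D t p.1 m) ∂β) = 0 ∧
    ∃ (τ : ℕ → ℝ) (βn : ℕ → Measure (Torus d × ((Fin d → ℝ) × ℝ)))
      (φn : ℕ → C(Torus d, ℝ)),
      (∀ n, 0 < τ n) ∧ (∀ n, βn n ∈ Lc c m) ∧
      Tendsto τ atTop (𝓝 0) ∧
      Tendsto (fun n => W1 β (βn n)) atTop (𝓝 0) ∧
      (∀ n, φn n ∈ 𝒱 (t + τ n) (((βn n).map (Theta (τ n))).map Prod.fst)) ∧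
      Tendsto (fun n =>
        (⨆ x : Torus d, |Aop D t (t + τ n) m (fun y => φn n y) x - φ x|) / τ n)
        atTop (𝓝 0) ∧
      0 ≤ atTop.liminf fun n =>
        (pairPhi (fun x => φn n x) ((βn n).map (Theta (τ n))) -
          pairPhi (fun x => φ x) (mhat m)) / τ n}

/-- The composition `π * γ` of a plan `π` with `γ`, obtained by disintegrating `γ`
along its first marginal. -/
def compPG {d : ℕ} (π : Measure (ExtSp d × ExtSp d))
    (γ : Measure (ExtSp d × ((Fin d → ℝ) × ℝ))) (hγ : IsFiniteMeasure γ) :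
    Measure (ExtSp d × ((Fin d → ℝ) × ℝ)) :=
  letI := hγ
  π.bind fun q => (γ.condKernel q.2).map fun v => (q.1, v)


section MFDIConcatAux

open ProbabilityTheory

instance instBorelTraj (d : ℕ) (s r : ℝ) : BorelSpace (Traj d s r) := ⟨rfl⟩

instance instNonemptyCM {X Y : Type*} [TopologicalSpace X] [TopologicalSpace Y] [Nonempty Y] :
    Nonempty C(X, Y) :=
  ⟨ContinuousMap.const _ (Classical.arbitrary Y)⟩

variable {d : ℕ}

lemma continuous_evT {s r : ℝ} (hsr : s ≤ r) (t : ℝ) : Continuous (evT (d := d) hsr t) :=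
  continuous_eval_const _

lemma measurable_evT {s r : ℝ} (hsr : s ≤ r) (t : ℝ) : Measurable (evT (d := d) hsr t) :=
  (continuous_evT hsr t).measurable

lemma mem_msupport_map {X Y : Type*} [TopologicalSpace X] [MeasurableSpace X]
    [TopologicalSpace Y] [MeasurableSpace Y] [OpensMeasurableSpace Y]
    {f : X → Y} (hfc : Continuous f) (hfm : Measurable f) (μ : Measure X) {x : X}
    (hx : x ∈ msupport μ) : f x ∈ msupport (μ.map f) := by
  intro O hO hfxO
  rw [Measure.map_apply hfm hO.measurableSet]
  exact hx _ (hO.preimage hfc) hfxO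

/-- Gluing of two probability measures along a common marginal. -/
lemma exists_coupling {α : Type*} [MeasurableSpace α] {Ω₁ Ω₂ : Type*}
    [MeasurableSpace Ω₁] [StandardBorelSpace Ω₁] [Nonempty Ω₁]
    [MeasurableSpace Ω₂] [StandardBorelSpace Ω₂] [Nonempty Ω₂]
    (χ₁ : Measure Ω₁) (χ₂ : Measure Ω₂) [IsProbabilityMeasure χ₁] [IsProbabilityMeasure χ₂]
    {e₁ : Ω₁ → α} {e₂ : Ω₂ → α} (he₁ : Measurable e₁) (he₂ : Measurable e₂)
    (hA₁ : MeasurableSet {q : α × Ω₁ | e₁ q.2 = q.1})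
    (hA₂ : MeasurableSet {q : α × Ω₂ | e₂ q.2 = q.1})
    (hE : MeasurableSet {p : Ω₁ × Ω₂ | e₁ p.1 = e₂ p.2})
    (hmatch : χ₁.map e₁ = χ₂.map e₂) :
    ∃ π : Measure (Ω₁ × Ω₂), IsProbabilityMeasure π ∧
      π.map Prod.fst = χ₁ ∧ π.map Prod.snd = χ₂ ∧ ∀ᵐ p ∂π, e₁ p.1 = e₂ p.2 := by
  classical
  set μ₁ := χ₁.map (fun w => (e₁ w, w)) with hμ₁
  set μ₂ := χ₂.map (fun w => (e₂ w, w)) with hμ₂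
  have hmm₁ : Measurable fun w : Ω₁ => (e₁ w, w) := he₁.prodMk measurable_id
  have hmm₂ : Measurable fun w : Ω₂ => (e₂ w, w) := he₂.prodMk measurable_id
  haveI : IsProbabilityMeasure μ₁ := Measure.isProbabilityMeasure_map hmm₁.aemeasurable
  haveI : IsProbabilityMeasure μ₂ := Measure.isProbabilityMeasure_map hmm₂.aemeasurable
  set ρ := χ₁.map e₁ with hρ
  haveI : IsProbabilityMeasure ρ := Measure.isProbabilityMeasure_map he₁.aemeasurable
  have hfst₁ : μ₁.fst = ρ := Measure.fst_map_prodMk measurable_id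
  have hfst₂ : μ₂.fst = ρ := by
    rw [hmatch]; exact Measure.fst_map_prodMk measurable_id
  have hsnd₁ : μ₁.snd = χ₁ := by rw [hμ₁, Measure.snd_map_prodMk he₁, Measure.map_id']
  have hsnd₂ : μ₂.snd = χ₂ := by rw [hμ₂, Measure.snd_map_prodMk he₂, Measure.map_id']
  set κ₁ := μ₁.condKernel with hκ₁
  set κ₂ := μ₂.condKernel with hκ₂
  have hd₁ : ρ ⊗ₘ κ₁ = μ₁ := by rw [← hfst₁]; exact μ₁.disintegrate κ₁
  have hd₂ : ρ ⊗ₘ κ₂ = μ₂ := by rw [← hfst₂]; exact μ₂.disintegrate κ₂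
  set κ := κ₁ ×ₖ κ₂ with hκ
  refine ⟨ρ.bind κ, ?_, ?_, ?_, ?_⟩
  · constructor
    rw [Measure.bind_apply MeasurableSet.univ κ.measurable.aemeasurable]
    simp
  · ext s hs
    rw [Measure.map_apply measurable_fst hs,
      Measure.bind_apply (measurable_fst hs) κ.measurable.aemeasurable]
    have hκx : ∀ x, κ x (Prod.fst ⁻¹' s) = κ₁ x s := by
      intro x
      rw [hκ, Kernel.prod_apply, ← Set.prod_univ, Measure.prod_prod, measure_univ, mul_one]
    simp_rw [hκx]
    calc ∫⁻ x, κ₁ x s ∂ρ = (ρ ⊗ₘ κ₁) (univ ×ˢ s) := by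
          rw [Measure.compProd_apply (MeasurableSet.univ.prod hs)]
          congr 1; ext x; simp
      _ = μ₁ (univ ×ˢ s) := by rw [hd₁]
      _ = χ₁ s := by
          rw [hμ₁, Measure.map_apply hmm₁ (MeasurableSet.univ.prod hs)]
          congr 1; ext w; simp
  · ext s hs
    rw [Measure.map_apply measurable_snd hs,
      Measure.bind_apply (measurable_snd hs) κ.measurable.aemeasurable]
    have hκx : ∀ x, κ x (Prod.snd ⁻¹' s) = κ₂ x s := by
      intro x
      rw [hκ, Kernel.prod_apply, ← Set.univ_prod, Measure.prod_prod, measure_univ, one_mul]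
    simp_rw [hκx]
    calc ∫⁻ x, κ₂ x s ∂ρ = (ρ ⊗ₘ κ₂) (univ ×ˢ s) := by
          rw [Measure.compProd_apply (MeasurableSet.univ.prod hs)]
          congr 1; ext x; simp
      _ = μ₂ (univ ×ˢ s) := by rw [hd₂]
      _ = χ₂ s := by
          rw [hμ₂, Measure.map_apply hmm₂ (MeasurableSet.univ.prod hs)]
          congr 1; ext w; simp
  · -- a.e. statement
    have hfiber : ∀ᵐ x ∂ρ, κ₁ x {w | e₁ w = x}ᶜ = 0 := by
      have h0 : (ρ ⊗ₘ κ₁) {q : α × Ω₁ | e₁ q.2 = q.1}ᶜ = 0 := by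
        rw [hd₁, hμ₁, Measure.map_apply hmm₁ hA₁.compl]
        have hpre : (fun w => (e₁ w, w)) ⁻¹' {q : α × Ω₁ | e₁ q.2 = q.1}ᶜ = ∅ := by
          ext w; simp
        rw [hpre]; exact measure_empty
      rw [Measure.compProd_apply hA₁.compl] at h0
      have hmeas := Kernel.measurable_kernel_prodMk_left (κ := κ₁) hA₁.compl
      have := (lintegral_eq_zero_iff hmeas).1 h0
      filter_upwards [this] with x hx
      exact hx
    have hfiber₂ : ∀ᵐ x ∂ρ, κ₂ x {w | e₂ w = x}ᶜ = 0 := by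
      have h0 : (ρ ⊗ₘ κ₂) {q : α × Ω₂ | e₂ q.2 = q.1}ᶜ = 0 := by
        rw [hd₂, hμ₂, Measure.map_apply hmm₂ hA₂.compl]
        have hpre : (fun w => (e₂ w, w)) ⁻¹' {q : α × Ω₂ | e₂ q.2 = q.1}ᶜ = ∅ := by
          ext w; simp
        rw [hpre]; exact measure_empty
      rw [Measure.compProd_apply hA₂.compl] at h0
      have hmeas := Kernel.measurable_kernel_prodMk_left (κ := κ₂) hA₂.compl
      have := (lintegral_eq_zero_iff hmeas).1 h0
      filter_upwards [this] with x hx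
      exact hx
    rw [ae_iff, Measure.bind_apply ?hms κ.measurable.aemeasurable]
    case hms => exact hE.compl
    have : ∀ᵐ x ∂ρ, κ x {p : Ω₁ × Ω₂ | ¬ e₁ p.1 = e₂ p.2} = 0 := by
      filter_upwards [hfiber, hfiber₂] with x h1 h2
      have hsub : {p : Ω₁ × Ω₂ | ¬ e₁ p.1 = e₂ p.2} ⊆
          ({w | e₁ w = x}ᶜ ×ˢ univ) ∪ (univ ×ˢ {w | e₂ w = x}ᶜ) := by
        intro p hp
        by_cases h1' : e₁ p.1 = x
        · by_cases h2' : e₂ p.2 = x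
          · exact absurd (h1'.trans h2'.symm) hp
          · exact Or.inr ⟨trivial, h2'⟩
        · exact Or.inl ⟨h1', trivial⟩
      have hle := measure_mono (μ := κ x) hsub
      have hub : κ x (({w | e₁ w = x}ᶜ ×ˢ univ) ∪ (univ ×ˢ {w | e₂ w = x}ᶜ)) = 0 := by
        refine le_antisymm ?_ zero_le
        refine le_trans (measure_union_le _ _) ?_
        rw [hκ, Kernel.prod_apply, Measure.prod_prod, Measure.prod_prod, h1, h2]
        simp
      exact le_antisymm (hle.trans hub.le) zero_le
    rw [lintegral_congr_ae this]
    simp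

section GlueAux
variable {d : ℕ}

/-- Concatenation of trajectories, extending the second by a constant shift so that the
result is continuous for every pair. -/
def glueT {s₀ s₁ s₂ : ℝ} (h01 : s₀ ≤ s₁) (h12 : s₁ ≤ s₂)
    (p : Traj d s₀ s₁ × Traj d s₁ s₂) : Traj d s₀ s₂ :=
  ⟨fun u => if (u : ℝ) ≤ s₁ then p.1 (projIcc s₀ s₁ h01 u) else
      p.2 (projIcc s₁ s₂ h12 u) +
        (p.1 ⟨s₁, right_mem_Icc.2 h01⟩ - p.2 ⟨s₁, left_mem_Icc.2 h12⟩), by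
    refine Continuous.if_le ?_ ?_ continuous_subtype_val continuous_const ?_
    · exact p.1.continuous.comp (continuous_projIcc.comp continuous_subtype_val)
    · exact (p.2.continuous.comp (continuous_projIcc.comp continuous_subtype_val)).add
        continuous_const
    · intro u hu
      have h1 : projIcc s₀ s₁ h01 (u : ℝ) = ⟨s₁, right_mem_Icc.2 h01⟩ := by
        rw [hu]; exact projIcc_right h01
      have h2 : projIcc s₁ s₂ h12 (u : ℝ) = ⟨s₁, left_mem_Icc.2 h12⟩ := by
        rw [hu]; exact projIcc_left h12
      rw [h1, h2]; abel⟩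

lemma glueT_apply_left {s₀ s₁ s₂ : ℝ} (h01 : s₀ ≤ s₁) (h12 : s₁ ≤ s₂)
    (p : Traj d s₀ s₁ × Traj d s₁ s₂) (u : Icc s₀ s₂) (hu : (u : ℝ) ≤ s₁) :
    glueT h01 h12 p u = p.1 (projIcc s₀ s₁ h01 u) := by
  simp only [glueT, ContinuousMap.coe_mk]
  exact if_pos hu

lemma glueT_apply_right {s₀ s₁ s₂ : ℝ} (h01 : s₀ ≤ s₁) (h12 : s₁ ≤ s₂)
    (p : Traj d s₀ s₁ × Traj d s₁ s₂) (u : Icc s₀ s₂) (hu : ¬ (u : ℝ) ≤ s₁) :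
    glueT h01 h12 p u = p.2 (projIcc s₁ s₂ h12 u) +
      (p.1 ⟨s₁, right_mem_Icc.2 h01⟩ - p.2 ⟨s₁, left_mem_Icc.2 h12⟩) := by
  simp only [glueT, ContinuousMap.coe_mk]
  exact if_neg hu

lemma lipschitz_glueT {s₀ s₁ s₂ : ℝ} (h01 : s₀ ≤ s₁) (h12 : s₁ ≤ s₂) :
    LipschitzWith 3 (glueT (d := d) h01 h12) := by
  apply LipschitzWith.of_dist_le_mul
  intro p q
  rw [ContinuousMap.dist_le (by positivity)]
  intro u
  have hd1 : dist p.1 q.1 ≤ dist p q := le_trans (le_max_left _ _) (le_of_eq Prod.dist_eq.symm)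
  have hd2 : dist p.2 q.2 ≤ dist p q := le_trans (le_max_right _ _) (le_of_eq Prod.dist_eq.symm)
  by_cases hu : (u : ℝ) ≤ s₁
  · rw [glueT_apply_left h01 h12 p u hu, glueT_apply_left h01 h12 q u hu]
    have := ContinuousMap.dist_apply_le_dist (f := p.1) (g := q.1) (projIcc s₀ s₁ h01 u)
    have h0 : (0:ℝ) ≤ dist p q := dist_nonneg
    calc dist (p.1 (projIcc s₀ s₁ h01 u)) (q.1 (projIcc s₀ s₁ h01 u)) ≤ dist p.1 q.1 := this
      _ ≤ dist p q := hd1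
      _ ≤ 3 * dist p q := by linarith
  · rw [glueT_apply_right h01 h12 p u hu, glueT_apply_right h01 h12 q u hu]
    refine le_trans (dist_add_add_le _ _ _ _) ?_
    refine le_trans (add_le_add (ContinuousMap.dist_apply_le_dist _)
      (dist_sub_sub_le _ _ _ _)) ?_
    refine le_trans (add_le_add le_rfl (add_le_add (ContinuousMap.dist_apply_le_dist _)
      (ContinuousMap.dist_apply_le_dist _))) ?_
    calc dist p.2 q.2 + (dist p.1 q.1 + dist p.2 q.2) ≤ dist p q + (dist p q + dist p q) := by
          exact add_le_add hd2 (add_le_add hd1 hd2)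
      _ = 3 * dist p q := by ring
      _ ≤ 3 * dist p q := le_rfl

lemma continuous_glueT {s₀ s₁ s₂ : ℝ} (h01 : s₀ ≤ s₁) (h12 : s₁ ≤ s₂) :
    Continuous (glueT (d := d) h01 h12) := (lipschitz_glueT h01 h12).continuous

lemma measurable_glueT {s₀ s₁ s₂ : ℝ} (h01 : s₀ ≤ s₁) (h12 : s₁ ≤ s₂) :
    Measurable (glueT (d := d) h01 h12) := (continuous_glueT h01 h12).measurable

lemma glue_evT_left {s₀ s₁ s₂ : ℝ} (h01 : s₀ ≤ s₁) (h12 : s₁ ≤ s₂)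
    (p : Traj d s₀ s₁ × Traj d s₁ s₂) {t : ℝ} (ht : t ∈ Icc s₀ s₂) (hts : t ≤ s₁) :
    evT (h01.trans h12) t (glueT h01 h12 p) = evT h01 t p.1 := by
  unfold evT
  rw [projIcc_of_mem _ ht]
  rw [glueT_apply_left h01 h12 p ⟨t, ht⟩ hts]

lemma glue_evT_right {s₀ s₁ s₂ : ℝ} (h01 : s₀ ≤ s₁) (h12 : s₁ ≤ s₂)
    (p : Traj d s₀ s₁ × Traj d s₁ s₂) {t : ℝ} (ht : t ∈ Icc s₀ s₂) (hts : ¬ t ≤ s₁)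
    (hp : p.1 ⟨s₁, right_mem_Icc.2 h01⟩ = p.2 ⟨s₁, left_mem_Icc.2 h12⟩) :
    evT (h01.trans h12) t (glueT h01 h12 p) = evT h12 t p.2 := by
  unfold evT
  rw [projIcc_of_mem _ ht]
  rw [glueT_apply_right h01 h12 p ⟨t, ht⟩ hts, hp, sub_self, add_zero]

/-- Restriction of a trajectory to the left subinterval. -/
def restrL {s₀ s₁ s₂ : ℝ} (h12 : s₁ ≤ s₂) (w : Traj d s₀ s₂) : Traj d s₀ s₁ :=
  w.comp ⟨Set.inclusion (Icc_subset_Icc_right h12), continuous_inclusion _⟩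

/-- Restriction of a trajectory to the right subinterval. -/
def restrR {s₀ s₁ s₂ : ℝ} (h01 : s₀ ≤ s₁) (w : Traj d s₀ s₂) : Traj d s₁ s₂ :=
  w.comp ⟨Set.inclusion (Icc_subset_Icc_left h01), continuous_inclusion _⟩

lemma continuous_restrL {s₀ s₁ s₂ : ℝ} (h12 : s₁ ≤ s₂) :
    Continuous (restrL (d := d) (s₀ := s₀) h12) := ContinuousMap.continuous_precomp _

lemma continuous_restrR {s₀ s₁ s₂ : ℝ} (h01 : s₀ ≤ s₁) :
    Continuous (restrR (d := d) (s₂ := s₂) h01) := ContinuousMap.continuous_precomp _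

lemma evT_restrL {s₀ s₁ s₂ : ℝ} (h01 : s₀ ≤ s₁) (h12 : s₁ ≤ s₂) (w : Traj d s₀ s₂)
    {t : ℝ} (ht : t ∈ Icc s₀ s₁) :
    evT h01 t (restrL h12 w) = evT (h01.trans h12) t w := by
  unfold evT restrL
  rw [ContinuousMap.comp_apply, projIcc_of_mem _ ht,
    projIcc_of_mem _ (⟨ht.1, ht.2.trans h12⟩ : t ∈ Icc s₀ s₂)]
  rfl

lemma evT_restrR {s₀ s₁ s₂ : ℝ} (h01 : s₀ ≤ s₁) (h12 : s₁ ≤ s₂) (w : Traj d s₀ s₂)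
    {t : ℝ} (ht : t ∈ Icc s₁ s₂) :
    evT h12 t (restrR h01 w) = evT (h01.trans h12) t w := by
  unfold evT restrR
  rw [ContinuousMap.comp_apply, projIcc_of_mem _ ht,
    projIcc_of_mem _ (⟨h01.trans ht.1, ht.2⟩ : t ∈ Icc s₀ s₂)]
  rfl

lemma restrL_glueT {s₀ s₁ s₂ : ℝ} (h01 : s₀ ≤ s₁) (h12 : s₁ ≤ s₂)
    (p : Traj d s₀ s₁ × Traj d s₁ s₂) : restrL h12 (glueT h01 h12 p) = p.1 := by
  refine ContinuousMap.ext fun u => ?_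
  have hu : ((Set.inclusion (Icc_subset_Icc_right h12) u : Icc s₀ s₂) : ℝ) ≤ s₁ := u.2.2
  rw [restrL, ContinuousMap.comp_apply]
  rw [show ((⟨Set.inclusion (Icc_subset_Icc_right h12), continuous_inclusion _⟩ :
      C(Icc s₀ s₁, Icc s₀ s₂)) u) = Set.inclusion (Icc_subset_Icc_right h12) u from rfl]
  rw [glueT_apply_left h01 h12 p _ hu]
  congr 1
  have : ((Set.inclusion (Icc_subset_Icc_right h12) u : Icc s₀ s₂) : ℝ) = (u : ℝ) := rfl
  rw [show projIcc s₀ s₁ h01 ((Set.inclusion (Icc_subset_Icc_right h12) u : Icc s₀ s₂) : ℝ)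
      = projIcc s₀ s₁ h01 (u : ℝ) from by rw [this]]
  rw [projIcc_of_mem h01 u.2]

lemma restrR_glueT {s₀ s₁ s₂ : ℝ} (h01 : s₀ ≤ s₁) (h12 : s₁ ≤ s₂)
    (p : Traj d s₀ s₁ × Traj d s₁ s₂)
    (hp : p.1 ⟨s₁, right_mem_Icc.2 h01⟩ = p.2 ⟨s₁, left_mem_Icc.2 h12⟩) :
    restrR h01 (glueT h01 h12 p) = p.2 := by
  refine ContinuousMap.ext fun u => ?_
  rw [restrR, ContinuousMap.comp_apply]
  rw [show ((⟨Set.inclusion (Icc_subset_Icc_left h01), continuous_inclusion _⟩ :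
      C(Icc s₁ s₂, Icc s₀ s₂)) u) = Set.inclusion (Icc_subset_Icc_left h01) u from rfl]
  have hval : ((Set.inclusion (Icc_subset_Icc_left h01) u : Icc s₀ s₂) : ℝ) = (u : ℝ) := rfl
  by_cases hu : (u : ℝ) ≤ s₁
  · have hu' : (u : ℝ) = s₁ := le_antisymm hu u.2.1
    rw [glueT_apply_left h01 h12 p _ (by rw [hval]; exact hu)]
    rw [show projIcc s₀ s₁ h01 ((Set.inclusion (Icc_subset_Icc_left h01) u : Icc s₀ s₂) : ℝ)
        = projIcc s₀ s₁ h01 s₁ from by rw [hval, hu']]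
    rw [projIcc_right h01, hp]
    congr 1
    exact Subtype.ext hu'.symm
  · rw [glueT_apply_right h01 h12 p _ (by rw [hval]; exact hu), hp, sub_self, add_zero]
    congr 1
    rw [show projIcc s₁ s₂ h12 ((Set.inclusion (Icc_subset_Icc_left h01) u : Icc s₀ s₂) : ℝ)
        = projIcc s₁ s₂ h12 (u : ℝ) from by rw [hval]]
    rw [projIcc_of_mem h12 u.2]

lemma projT_add (a b : Fin d → ℝ) : projT (a + b) = projT a + projT b := rfl

end GlueAux


section SolConcatAux
variable {d : ℕ}

lemma ae_ne_restrict (s : Set ℝ) (a : ℝ) : ∀ᵐ t ∂(volume.restrict s), t ≠ a := by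
  rw [ae_iff]
  have h1 : {t : ℝ | ¬ t ≠ a} = {a} := by ext t; simp
  rw [h1]
  refine le_antisymm (le_trans (Measure.restrict_apply_le _ _) ?_) zero_le
  simp

lemma ae_restrict_union' {P : ℝ → Prop} {s t : Set ℝ}
    (hs : ∀ᵐ x ∂(volume.restrict s), P x) (ht : ∀ᵐ x ∂(volume.restrict t), P x) :
    ∀ᵐ x ∂(volume.restrict (s ∪ t)), P x := by
  rw [ae_iff] at hs ht ⊢
  have h := Measure.restrict_union_le (μ := volume) s t
  have h2 := Measure.le_iff'.1 h {a | ¬ P a}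
  rw [Measure.add_apply, hs, ht] at h2
  simpa using le_antisymm (by simpa using h2) zero_le

lemma sol_concat {U : Type*} [MetricSpace U] [CompactSpace U] (D : MFGData d U)
    {s₀ s₁ s₂ : ℝ} (h01 : s₀ ≤ s₁) (h12 : s₁ ≤ s₂)
    (m₁ m₂ m : ℝ → Measure (Torus d)) (w : Traj d s₀ s₂)
    (hm₁ : ∀ t ∈ Icc s₀ s₁, m₁ t = m t) (hm₂ : ∀ t ∈ Ioc s₁ s₂, m₂ t = m t)
    (h₁ : restrL h12 w ∈ SOLset D h01 m₁) (h₂ : restrR h01 w ∈ SOLset D h12 m₂) :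
    w ∈ SOLset D (h01.trans h12) m := by
  classical
  obtain ⟨y₁, hy₁⟩ := mem_iUnion.1 h₁
  obtain ⟨y₂, hy₂⟩ := mem_iUnion.1 h₂
  obtain ⟨-, v₁, hv₁int, hv₁mem, hv₁eq⟩ := hy₁
  obtain ⟨-, v₂, hv₂int, hv₂mem, hv₂eq⟩ := hy₂
  have hsr : s₀ ≤ s₂ := h01.trans h12
  set v : ℝ → (Fin d → ℝ) × ℝ := fun t => if t ≤ s₁ then v₁ t else v₂ t with hvdef
  have hIccU : Icc s₀ s₂ = Icc s₀ s₁ ∪ Icc s₁ s₂ := (Icc_union_Icc_eq_Icc h01 h12).symm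
  have hint1 : IntegrableOn v (Icc s₀ s₁) := by
    refine hv₁int.congr ?_
    filter_upwards [ae_restrict_mem measurableSet_Icc] with t ht
    simp only [hvdef]
    rw [if_pos ht.2]
  have hint2 : IntegrableOn v (Icc s₁ s₂) := by
    refine hv₂int.congr ?_
    filter_upwards [ae_restrict_mem measurableSet_Icc,
      ae_ne_restrict (Icc s₁ s₂) s₁] with t ht hne
    simp only [hvdef]
    rw [if_neg (not_le.2 (lt_of_le_of_ne ht.1 (Ne.symm hne)))]
  have hIntv : IntegrableOn v (Icc s₀ s₂) := by rw [hIccU]; exact hint1.union hint2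
  have eL : ∀ t ∈ Icc s₀ s₁, evT h01 t (restrL h12 w) = evT (h01.trans h12) t w :=
    fun t ht => evT_restrL h01 h12 w ht
  have eR : ∀ t ∈ Icc s₁ s₂, evT h12 t (restrR h01 w) = evT (h01.trans h12) t w :=
    fun t ht => evT_restrR h01 h12 w ht
  have hbase : evT h01 s₀ (restrL h12 w) = evT (h01.trans h12) s₀ w :=
    eL s₀ (left_mem_Icc.2 h01)
  have hii1 : ∀ a b : ℝ, a ≤ b → Icc a b ⊆ Icc s₀ s₂ →
      IntervalIntegrable (fun θ => (v θ).1) volume a b := by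
    intro a b hab hsub
    apply IntegrableOn.intervalIntegrable
    rw [uIcc_of_le hab]
    have h' : IntegrableOn (fun θ => (v θ).1) (Icc s₀ s₂) volume := hIntv.fst
    exact h'.mono_set hsub
  have hii2 : ∀ a b : ℝ, a ≤ b → Icc a b ⊆ Icc s₀ s₂ →
      IntervalIntegrable (fun θ => (v θ).2) volume a b := by
    intro a b hab hsub
    apply IntegrableOn.intervalIntegrable
    rw [uIcc_of_le hab]
    have h' : IntegrableOn (fun θ => (v θ).2) (Icc s₀ s₂) volume := hIntv.snd
    exact h'.mono_set hsub
  refine mem_iUnion.2 ⟨(evT (h01.trans h12) s₀ w).1, rfl, v, hIntv, ?_, ?_⟩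
  · rw [hIccU]
    apply ae_restrict_union'
    · filter_upwards [hv₁mem, ae_restrict_mem measurableSet_Icc] with t hF ht
      simp only [hvdef]
      rw [if_pos ht.2, ← hm₁ t ht, ← eL t ht]
      exact hF
    · filter_upwards [hv₂mem, ae_restrict_mem measurableSet_Icc,
        ae_ne_restrict (Icc s₁ s₂) s₁] with t hF ht hne
      have hlt : s₁ < t := lt_of_le_of_ne ht.1 (Ne.symm hne)
      simp only [hvdef]
      rw [if_neg (not_le.2 hlt), ← hm₂ t ⟨hlt, ht.2⟩, ← eR t ht]
      exact hF
  · intro t ht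
    by_cases hts : t ≤ s₁
    · have ht1 : t ∈ Icc s₀ s₁ := ⟨ht.1, hts⟩
      have hA := hv₁eq t ht1
      rw [eL t ht1, hbase] at hA
      have hI1 : ∫ θ in s₀..t, (v θ).1 = ∫ θ in s₀..t, (v₁ θ).1 := by
        apply intervalIntegral.integral_congr
        intro θ hθ
        rw [uIcc_of_le ht1.1] at hθ
        simp only [hvdef]
        rw [if_pos (hθ.2.trans hts)]
      have hI2 : ∫ θ in s₀..t, (v θ).2 = ∫ θ in s₀..t, (v₁ θ).2 := by
        apply intervalIntegral.integral_congr
        intro θ hθ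
        rw [uIcc_of_le ht1.1] at hθ
        simp only [hvdef]
        rw [if_pos (hθ.2.trans hts)]
      rw [hA, hI1, hI2]
    · have hlt : s₁ < t := not_le.1 hts
      have ht2 : t ∈ Icc s₁ s₂ := ⟨hlt.le, ht.2⟩
      have hA := hv₁eq s₁ (right_mem_Icc.2 h01)
      rw [eL s₁ (right_mem_Icc.2 h01), hbase] at hA
      have hB := hv₂eq t ht2
      rw [eR t ht2, eR s₁ (left_mem_Icc.2 h12)] at hB
      have h11 : ∫ θ in s₀..s₁, (v θ).1 = ∫ θ in s₀..s₁, (v₁ θ).1 := by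
        apply intervalIntegral.integral_congr
        intro θ hθ
        rw [uIcc_of_le h01] at hθ
        simp only [hvdef]
        rw [if_pos hθ.2]
      have h21 : ∫ θ in s₀..s₁, (v θ).2 = ∫ θ in s₀..s₁, (v₁ θ).2 := by
        apply intervalIntegral.integral_congr
        intro θ hθ
        rw [uIcc_of_le h01] at hθ
        simp only [hvdef]
        rw [if_pos hθ.2]
      have h12' : ∫ θ in s₁..t, (v θ).1 = ∫ θ in s₁..t, (v₂ θ).1 := by
        apply intervalIntegral.integral_congr_ae
        refine Eventually.of_forall fun θ hθ => ?_
        rw [uIoc_of_le hlt.le] at hθ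
        simp only [hvdef]
        rw [if_neg (not_le.2 hθ.1)]
      have h22' : ∫ θ in s₁..t, (v θ).2 = ∫ θ in s₁..t, (v₂ θ).2 := by
        apply intervalIntegral.integral_congr_ae
        refine Eventually.of_forall fun θ hθ => ?_
        rw [uIoc_of_le hlt.le] at hθ
        simp only [hvdef]
        rw [if_neg (not_le.2 hθ.1)]
      have hadd1 : ∫ θ in s₀..t, (v θ).1 =
          (∫ θ in s₀..s₁, (v θ).1) + ∫ θ in s₁..t, (v θ).1 :=
        (intervalIntegral.integral_add_adjacent_intervals
          (hii1 s₀ s₁ h01 (Icc_subset_Icc le_rfl h12))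
          (hii1 s₁ t hlt.le (Icc_subset_Icc h01 ht.2))).symm
      have hadd2 : ∫ θ in s₀..t, (v θ).2 =
          (∫ θ in s₀..s₁, (v θ).2) + ∫ θ in s₁..t, (v θ).2 :=
        (intervalIntegral.integral_add_adjacent_intervals
          (hii2 s₀ s₁ h01 (Icc_subset_Icc le_rfl h12))
          (hii2 s₁ t hlt.le (Icc_subset_Icc h01 ht.2))).symm
      rw [hB, hA, hadd1, hadd2, h11, h21, h12', h22']
      simp only
      refine Prod.ext ?_ ?_
      · show ((evT (h01.trans h12) s₀ w).1 + projT (∫ θ in s₀..s₁, (v₁ θ).1)) +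
          projT (∫ θ in s₁..t, (v₂ θ).1) = (evT (h01.trans h12) s₀ w).1 +
          projT ((∫ θ in s₀..s₁, (v₁ θ).1) + ∫ θ in s₁..t, (v₂ θ).1)
        rw [projT_add, add_assoc]
      · show ((evT (h01.trans h12) s₀ w).2 + (∫ θ in s₀..s₁, (v₁ θ).2)) +
          (∫ θ in s₁..t, (v₂ θ).2) = (evT (h01.trans h12) s₀ w).2 +
          ((∫ θ in s₀..s₁, (v₁ θ).2) + ∫ θ in s₁..t, (v₂ θ).2)
        rw [add_assoc]

end SolConcatAux


end MFDIConcatAux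


/-- Proposition 1.2: the concatenation of two solutions of the MFDI is a solution. -/
theorem mfdi_concat {d : ℕ} {U : Type*} [MetricSpace U] [CompactSpace U]
    (D : MFGData d U) {s₀ s₁ s₂ : ℝ}
    (h0 : 0 ≤ s₀) (h01 : s₀ < s₁) (h12 : s₁ < s₂) (h2 : s₂ ≤ D.T)
    (ν₁ ν₂ : ℝ → MeasureTheory.Measure (ExtSp d))
    (hν₁ : SolvesMFDI D h01.le ν₁) (hν₂ : SolvesMFDI D h12.le ν₂)
    (hglue : ν₁ s₁ = ν₂ s₁) :
    SolvesMFDI D (h01.le.trans h12.le) (fun t => if t ≤ s₁ then ν₁ t else ν₂ t) := by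
  classical
  obtain ⟨χ₁, hP₁, hFM₁, hmarg₁, hsupp₁⟩ := hν₁
  obtain ⟨χ₂, hP₂, hFM₂, hmarg₂, hsupp₂⟩ := hν₂
  haveI := hP₁; haveI := hP₂
  have hsr : s₀ ≤ s₂ := h01.le.trans h12.le
  set e₁ : Traj d s₀ s₁ → ExtSp d := fun w => w ⟨s₁, right_mem_Icc.2 h01.le⟩ with he₁def
  set e₂ : Traj d s₁ s₂ → ExtSp d := fun w => w ⟨s₁, left_mem_Icc.2 h12.le⟩ with he₂def
  have he₁eq : evT h01.le s₁ = e₁ := funext fun w => by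
    unfold evT; rw [projIcc_right]
  have he₂eq : evT h12.le s₁ = e₂ := funext fun w => by
    unfold evT; rw [projIcc_left]
  have he₁ : Measurable e₁ := by rw [← he₁eq]; exact measurable_evT _ _
  have he₂ : Measurable e₂ := by rw [← he₂eq]; exact measurable_evT _ _
  have hA₁ : MeasurableSet {q : ExtSp d × Traj d s₀ s₁ | e₁ q.2 = q.1} :=
    measurableSet_eq_fun (he₁.comp measurable_snd) measurable_fst
  have hA₂ : MeasurableSet {q : ExtSp d × Traj d s₁ s₂ | e₂ q.2 = q.1} :=
    measurableSet_eq_fun (he₂.comp measurable_snd) measurable_fst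
  have hEm : MeasurableSet {p : Traj d s₀ s₁ × Traj d s₁ s₂ | e₁ p.1 = e₂ p.2} :=
    measurableSet_eq_fun (he₁.comp measurable_fst) (he₂.comp measurable_snd)
  have hmatch : χ₁.map e₁ = χ₂.map e₂ := by
    rw [← he₁eq, ← he₂eq, ← hmarg₁ s₁ (right_mem_Icc.2 h01.le),
      ← hmarg₂ s₁ (left_mem_Icc.2 h12.le), hglue]
  obtain ⟨π, hπP, hπ1, hπ2, hπE⟩ := exists_coupling χ₁ χ₂ he₁ he₂ hA₁ hA₂ hEm hmatch
  haveI := hπP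
  set G := glueT (d := d) h01.le h12.le with hGdef
  have hGm : Measurable G := measurable_glueT _ _
  have hGc : Continuous G := continuous_glueT _ _
  refine ⟨π.map G, Measure.isProbabilityMeasure_map hGm.aemeasurable, ?_, ?_, ?_⟩
  · -- finite first moment
    obtain ⟨b₁, hb₁⟩ := hFM₁
    obtain ⟨b₂, hb₂⟩ := hFM₂
    refine ⟨G (b₁, b₂), ?_⟩
    refine (integrable_map_measure
      ((continuous_id.dist continuous_const).aestronglyMeasurable) hGm.aemeasurable).2 ?_
    have hi1 : Integrable (fun p : Traj d s₀ s₁ × Traj d s₁ s₂ => dist p.1 b₁) π := by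
      have hb₁' : Integrable (fun w => dist w b₁) (π.map Prod.fst) := by
        rw [hπ1]; exact hb₁
      exact (integrable_map_measure
        ((continuous_id.dist continuous_const).aestronglyMeasurable)
        measurable_fst.aemeasurable).1 hb₁'
    have hi2 : Integrable (fun p : Traj d s₀ s₁ × Traj d s₁ s₂ => dist p.2 b₂) π := by
      have hb₂' : Integrable (fun w => dist w b₂) (π.map Prod.snd) := by
        rw [hπ2]; exact hb₂
      exact (integrable_map_measure
        ((continuous_id.dist continuous_const).aestronglyMeasurable)
        measurable_snd.aemeasurable).1 hb₂'
    refine Integrable.mono' ((hi1.add hi2).const_mul 3)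
      ((hGc.dist continuous_const).aestronglyMeasurable) ?_
    refine Eventually.of_forall fun p => ?_
    show ‖dist (G p) (G (b₁, b₂))‖ ≤ 3 * (dist p.1 b₁ + dist p.2 b₂)
    rw [Real.norm_eq_abs, abs_of_nonneg dist_nonneg]
    have hl := (lipschitz_glueT (d := d) h01.le h12.le).dist_le_mul p (b₁, b₂)
    have hl' : dist (G p) (G (b₁, b₂)) ≤ 3 * dist p (b₁, b₂) := by
      rw [hGdef]
      refine hl.trans (le_of_eq ?_)
      norm_num
    have hmax : dist p (b₁, b₂) ≤ dist p.1 b₁ + dist p.2 b₂ := by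
      rw [Prod.dist_eq]
      exact max_le (le_add_of_nonneg_right dist_nonneg) (le_add_of_nonneg_left dist_nonneg)
    calc dist (G p) (G (b₁, b₂)) ≤ 3 * dist p (b₁, b₂) := hl'
      _ ≤ 3 * (dist p.1 b₁ + dist p.2 b₂) := by linarith
  · -- marginals
    intro t ht
    simp only
    by_cases hts : t ≤ s₁
    · have ht1 : t ∈ Icc s₀ s₁ := ⟨ht.1, hts⟩
      have hcomp : evT (h01.le.trans h12.le) t ∘ G = evT h01.le t ∘ Prod.fst :=
        funext fun p => glue_evT_left h01.le h12.le p ht hts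
      rw [if_pos hts, Measure.map_map (measurable_evT _ _) hGm, hcomp,
        ← Measure.map_map (measurable_evT _ _) measurable_fst, hπ1]
      exact hmarg₁ t ht1
    · have hlt : s₁ < t := not_le.1 hts
      have ht2 : t ∈ Icc s₁ s₂ := ⟨hlt.le, ht.2⟩
      have hcomp : (evT (h01.le.trans h12.le) t) ∘ G =ᵐ[π] (evT h12.le t) ∘ Prod.snd := by
        filter_upwards [hπE] with p hp
        exact glue_evT_right h01.le h12.le p ht hts hp
      rw [if_neg hts, Measure.map_map (measurable_evT _ _) hGm, Measure.map_congr hcomp,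
        ← Measure.map_map (measurable_evT _ _) measurable_snd, hπ2]
      exact hmarg₂ t ht2
  · -- support
    intro w hw
    have hrL : (π.map G).map (restrL h12.le) = χ₁ := by
      rw [Measure.map_map (continuous_restrL h12.le).measurable hGm]
      have hco : restrL (d := d) h12.le ∘ G = Prod.fst :=
        funext fun p => restrL_glueT h01.le h12.le p
      rw [hco, hπ1]
    have hrR : (π.map G).map (restrR h01.le) = χ₂ := by
      rw [Measure.map_map (continuous_restrR h01.le).measurable hGm]
      have hae : (restrR (d := d) h01.le) ∘ G =ᵐ[π] Prod.snd := by
        filter_upwards [hπE] with p hp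
        exact restrR_glueT h01.le h12.le p hp
      rw [Measure.map_congr hae, hπ2]
    have h1 : restrL h12.le w ∈ msupport χ₁ := by
      rw [← hrL]
      exact mem_msupport_map (continuous_restrL h12.le)
        (continuous_restrL h12.le).measurable _ hw
    have h2 : restrR h01.le w ∈ msupport χ₂ := by
      rw [← hrR]
      exact mem_msupport_map (continuous_restrR h01.le)
        (continuous_restrR h01.le).measurable _ hw
    refine sol_concat D h01.le h12.le _ _ _ w ?_ ?_ (hsupp₁ h1) (hsupp₂ h2)
    · intro t ht'
      simp only
      rw [if_pos ht'.2]
    · intro t ht'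
      simp only
      rw [if_neg (not_le.2 ht'.1)]

end
end

section
/- Let ν, ν′ ∈ 𝒫¹(𝕋^d×ℝ), let γ ∈ ℒ_*(ν), let τ ≥ 0, and let π⁰ be an optimal coupling between ν′ and ν (i.e. a coupling attaining W₁(ν′,ν)). Then W₁(Ξ^τ#γ, Ξ^τ#(π⁰*γ)) ≤ W₁(ν, ν′). -/
open MeasureTheory Set Filter Topology

noncomputable section

variable {d : ℕ} {U : Type*} [MetricSpace U] [CompactSpace U]

variable {d : ℕ} {U : Type*} [MetricSpace U] [CompactSpace U]

open ProbabilityTheory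

lemma W1_symm {X : Type*} [MeasurableSpace X] [PseudoMetricSpace X] (μ ν : Measure X) :
    W1 μ ν = W1 ν μ := by
  have h : ∀ μ ν : Measure X,
      {c : ℝ | ∃ φ : X → ℝ, LipschitzWith 1 φ ∧ c = (∫ x, φ x ∂μ) - ∫ x, φ x ∂ν} ⊆
      {c : ℝ | ∃ φ : X → ℝ, LipschitzWith 1 φ ∧ c = (∫ x, φ x ∂ν) - ∫ x, φ x ∂μ} := by
    intro μ ν c hc
    obtain ⟨φ, hφ, rfl⟩ := hc
    refine ⟨fun x => -φ x, hφ.neg, ?_⟩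
    rw [integral_neg, integral_neg]
    ring
  unfold W1
  congr 1
  exact le_antisymm (h μ ν) (h ν μ)

lemma integrable_dist_pt {X : Type*} [MeasurableSpace X] [PseudoMetricSpace X]
    [OpensMeasurableSpace X] (μ : Measure X) [IsFiniteMeasure μ]
    (h : FiniteFirstMoment μ) (x₁ : X) : Integrable (fun x => dist x x₁) μ := by
  obtain ⟨x₀, h0⟩ := h
  refine Integrable.mono' (h0.add (integrable_const (dist x₀ x₁)))
    ((continuous_id.dist continuous_const).aestronglyMeasurable) ?_
  filter_upwards with x
  rw [Real.norm_eq_abs, abs_of_nonneg dist_nonneg]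
  exact dist_triangle x x₀ x₁

lemma projT_norm_le {d : ℕ} (c : Fin d → ℝ) : ‖projT c‖ ≤ ‖c‖ := by
  rw [pi_norm_le_iff_of_nonneg (norm_nonneg c)]
  intro i
  show ‖((c i : ℝ) : AddCircle (1:ℝ))‖ ≤ ‖c‖
  refine le_trans ?_ (norm_le_pi_norm c i)
  rw [AddCircle.norm_eq, Real.norm_eq_abs]
  simpa using round_le (c i) 0

lemma projT_sub {d : ℕ} (a b : Fin d → ℝ) : projT a - projT b = projT (a - b) := by
  funext i
  exact (AddCircle.coe_sub _ _ _).symm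

lemma Xi_add {d : ℕ} (τ : ℝ) (w : ExtSp d) (v : (Fin d → ℝ) × ℝ) :
    Xi τ (w, v) = w + (projT (τ • v.1), τ * v.2) := rfl

lemma Xi_dist_same {d : ℕ} (τ : ℝ) (w w' : ExtSp d) (v : (Fin d → ℝ) × ℝ) :
    dist (Xi τ (w, v)) (Xi τ (w', v)) = dist w w' := by
  rw [Xi_add, Xi_add, dist_add_right]

lemma Xi_dist_le {d : ℕ} (τ : ℝ) (p p' : ExtSp d × ((Fin d → ℝ) × ℝ)) :
    dist (Xi τ p) (Xi τ p') ≤ dist p.1 p'.1 + |τ| * dist p.2 p'.2 := by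
  obtain ⟨w, v⟩ := p; obtain ⟨w', v'⟩ := p'
  rw [Xi_add, Xi_add]
  refine (dist_add_add_le _ _ _ _).trans (add_le_add le_rfl ?_)
  rw [Prod.dist_eq]
  refine max_le ?_ ?_
  · rw [dist_eq_norm, projT_sub, ← smul_sub]
    calc ‖projT (τ • (v.1 - v'.1))‖ ≤ ‖τ • (v.1 - v'.1)‖ := projT_norm_le _
      _ = |τ| * ‖v.1 - v'.1‖ := by rw [norm_smul, Real.norm_eq_abs]
      _ ≤ |τ| * dist v v' := by
          refine mul_le_mul_of_nonneg_left ?_ (abs_nonneg τ)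
          rw [← dist_eq_norm]
          exact (le_max_left _ _).trans_eq (Prod.dist_eq (x := v) (y := v')).symm
  · rw [Real.dist_eq, ← mul_sub, abs_mul]
    refine mul_le_mul_of_nonneg_left ?_ (abs_nonneg τ)
    rw [← Real.dist_eq]
    exact (le_max_right _ _).trans_eq (Prod.dist_eq (x := v) (y := v')).symm

lemma Xi_continuous {d : ℕ} (τ : ℝ) : Continuous (Xi (d := d) τ) := by
  unfold Xi projT
  refine Continuous.prodMk (Continuous.add (by fun_prop) ?_) (by fun_prop)
  refine continuous_pi fun i => (AddCircle.continuous_mk' 1).comp ?_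
  fun_prop

lemma integrable_comp_Xi {d : ℕ} (τ : ℝ)
    (γ : Measure (ExtSp d × ((Fin d → ℝ) × ℝ))) [IsFiniteMeasure γ]
    (hγm : FiniteFirstMoment γ) {φ : ExtSp d → ℝ} (hφ : LipschitzWith 1 φ) :
    Integrable (fun p => φ (Xi τ p)) γ := by
  obtain ⟨p₀, h0⟩ := hγm
  refine Integrable.mono'
    ((integrable_const (|φ (Xi τ p₀)|)).add (h0.const_mul (1 + |τ|)))
    ((hφ.continuous.comp (Xi_continuous τ)).aestronglyMeasurable) ?_
  filter_upwards with p
  rw [Real.norm_eq_abs]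
  have h1 : |φ (Xi τ p)| ≤ |φ (Xi τ p₀)| + dist (φ (Xi τ p)) (φ (Xi τ p₀)) := by
    rw [Real.dist_eq]
    calc |φ (Xi τ p)| = |φ (Xi τ p₀) + (φ (Xi τ p) - φ (Xi τ p₀))| := by congr 1; ring
      _ ≤ |φ (Xi τ p₀)| + |φ (Xi τ p) - φ (Xi τ p₀)| := abs_add_le _ _
  refine h1.trans (add_le_add le_rfl ?_)
  calc dist (φ (Xi τ p)) (φ (Xi τ p₀)) ≤ 1 * dist (Xi τ p) (Xi τ p₀) := hφ.dist_le_mul _ _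
    _ = dist (Xi τ p) (Xi τ p₀) := one_mul _
    _ ≤ dist p.1 p₀.1 + |τ| * dist p.2 p₀.2 := Xi_dist_le τ p p₀
    _ ≤ dist p p₀ + |τ| * dist p p₀ := by
        refine add_le_add ?_ (mul_le_mul_of_nonneg_left ?_ (abs_nonneg τ))
        · exact (le_max_left _ _).trans_eq (Prod.dist_eq (x := p) (y := p₀)).symm
        · exact (le_max_right _ _).trans_eq (Prod.dist_eq (x := p) (y := p₀)).symm
    _ = (1 + |τ|) * dist p p₀ := by ring

/-- Lemma 6.1(2): estimate of the Wasserstein distance between the shift of `γ` and the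
shift of the composition `π⁰ * γ` with an optimal plan `π⁰`. -/
theorem Xi_plan_estimate {d : ℕ} (ν ν' : MeasureTheory.Measure (ExtSp d))
    (hν : MeasureTheory.IsProbabilityMeasure ν)
    (hν' : MeasureTheory.IsProbabilityMeasure ν')
    (hνm : FiniteFirstMoment ν) (hν'm : FiniteFirstMoment ν')
    (γ : MeasureTheory.Measure (ExtSp d × ((Fin d → ℝ) × ℝ)))
    (hγ : MeasureTheory.IsProbabilityMeasure γ) (hγm : FiniteFirstMoment γ)
    (hmarg : γ.map Prod.fst = ν)
    {τ : ℝ} (hτ : 0 ≤ τ)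
    (π₀ : MeasureTheory.Measure (ExtSp d × ExtSp d))
    (hπ : MeasureTheory.IsProbabilityMeasure π₀)
    (hπ₁ : π₀.map Prod.fst = ν') (hπ₂ : π₀.map Prod.snd = ν)
    (hopt : (∫ q, dist q.1 q.2 ∂π₀) = W1 ν' ν) :
    W1 (γ.map (Xi τ)) ((compPG π₀ γ (by haveI := hγ; infer_instance)).map (Xi τ)) ≤ W1 ν ν' := by
  haveI := hγ; haveI := hν; haveI := hν'; haveI := hπ
  suffices H : ∀ hfin : IsFiniteMeasure γ,
      W1 (γ.map (Xi τ)) ((compPG π₀ γ hfin).map (Xi τ)) ≤ W1 ν ν' from H _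
  intro hfin
  classical
  set κ' : Kernel (ExtSp d × ExtSp d) ((Fin d → ℝ) × ℝ) :=
    γ.condKernel.comap Prod.snd measurable_snd with hκ'def
  haveI : IsMarkovKernel κ' := by rw [hκ'def]; infer_instance
  set M : Measure ((ExtSp d × ExtSp d) × ((Fin d → ℝ) × ℝ)) := π₀ ⊗ₘ κ' with hMdef
  -- basic measurable maps
  have hg : Measurable (fun z : (ExtSp d × ExtSp d) × ((Fin d → ℝ) × ℝ) =>
      ((z.1.2, z.2) : ExtSp d × ((Fin d → ℝ) × ℝ))) :=
    measurable_fst.snd.prodMk measurable_snd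
  have hf : Measurable (fun z : (ExtSp d × ExtSp d) × ((Fin d → ℝ) × ℝ) =>
      ((z.1.1, z.2) : ExtSp d × ((Fin d → ℝ) × ℝ))) :=
    measurable_fst.fst.prodMk measurable_snd
  have hγfst : γ.fst = ν := hmarg
  -- the first marginal of `M` is `π₀`
  have hfst : M.map Prod.fst = π₀ := Measure.fst_compProd π₀ κ'
  -- the law of `(q.2, v)` under `M` is `γ`
  have hA : M.map (fun z => ((z.1.2, z.2) : ExtSp d × ((Fin d → ℝ) × ℝ))) = γ := by
    ext s hs
    rw [Measure.map_apply hg hs, hMdef, Measure.compProd_apply (hg hs)]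
    have e1 : ∀ q : ExtSp d × ExtSp d,
        κ' q (Prod.mk q ⁻¹' ((fun z : (ExtSp d × ExtSp d) × ((Fin d → ℝ) × ℝ) =>
          ((z.1.2, z.2) : ExtSp d × ((Fin d → ℝ) × ℝ))) ⁻¹' s))
          = γ.condKernel q.2 (Prod.mk q.2 ⁻¹' s) := by
      intro q
      rw [hκ'def, Kernel.comap_apply]
      rfl
    simp_rw [e1]
    have e2 : ∫⁻ q, γ.condKernel q.2 (Prod.mk q.2 ⁻¹' s) ∂π₀
        = ∫⁻ w, γ.condKernel w (Prod.mk w ⁻¹' s) ∂ν := by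
      rw [← hπ₂]
      exact (lintegral_map (Kernel.measurable_kernel_prodMk_left hs) measurable_snd).symm
    rw [e2, ← Measure.compProd_apply hs, ← hγfst, γ.disintegrate γ.condKernel]
  -- the law of `(q.1, v)` under `M` is `compPG π₀ γ`
  have hκmeas : Measurable (fun q : ExtSp d × ExtSp d =>
      (γ.condKernel q.2).map (fun v => (q.1, v))) := by
    have e : (fun q : ExtSp d × ExtSp d => (γ.condKernel q.2).map (fun v => (q.1, v)))
        = ⇑((Kernel.deterministic (Prod.fst : ExtSp d × ExtSp d → ExtSp d)
            measurable_fst).prod κ') := by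
      funext q
      rw [Kernel.prod_apply, Kernel.deterministic_apply, hκ'def, Kernel.comap_apply,
        Measure.dirac_prod]
    rw [e]
    exact Kernel.measurable _
  have hB : M.map (fun z => ((z.1.1, z.2) : ExtSp d × ((Fin d → ℝ) × ℝ)))
      = compPG π₀ γ hfin := by
    have hcomp : compPG π₀ γ hfin
        = π₀.bind (fun q => (γ.condKernel q.2).map (fun v => (q.1, v))) := rfl
    ext s hs
    rw [hcomp, Measure.bind_apply hs hκmeas.aemeasurable, Measure.map_apply hf hs, hMdef,
      Measure.compProd_apply (hf hs)]
    refine lintegral_congr fun q => ?_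
    rw [Measure.map_apply measurable_prodMk_left hs, hκ'def, Kernel.comap_apply]
    rfl
  -- rewrite the two measures
  have hmapγ : γ.map (Xi τ)
      = M.map (fun z => Xi τ ((z.1.2, z.2) : ExtSp d × ((Fin d → ℝ) × ℝ))) := by
    rw [← hA, Measure.map_map (Xi_continuous τ).measurable hg]
    rfl
  have hmapC : (compPG π₀ γ hfin).map (Xi τ)
      = M.map (fun z => Xi τ ((z.1.1, z.2) : ExtSp d × ((Fin d → ℝ) × ℝ))) := by
    rw [← hB, Measure.map_map (Xi_continuous τ).measurable hf]
    rfl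
  rw [hmapγ, hmapC]
  apply Real.sSup_le
  · rintro c ⟨φ, hφ, rfl⟩
    have hφc := hφ.continuous
    have hlip : ∀ a b : ExtSp d, dist (φ a) (φ b) ≤ dist a b := fun a b => by
      simpa using hφ.dist_le_mul a b
    have hmg : Measurable (fun z : (ExtSp d × ExtSp d) × ((Fin d → ℝ) × ℝ) =>
        Xi τ (z.1.2, z.2)) := (Xi_continuous τ).measurable.comp hg
    have hmf : Measurable (fun z : (ExtSp d × ExtSp d) × ((Fin d → ℝ) × ℝ) =>
        Xi τ (z.1.1, z.2)) := (Xi_continuous τ).measurable.comp hf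
    rw [integral_map hmg.aemeasurable hφc.aestronglyMeasurable,
      integral_map hmf.aemeasurable hφc.aestronglyMeasurable]
    -- integrability facts
    have hint1 : Integrable (fun z : (ExtSp d × ExtSp d) × ((Fin d → ℝ) × ℝ) =>
        φ (Xi τ (z.1.2, z.2))) M := by
      have h := integrable_comp_Xi τ γ hγm hφ
      rw [← hA] at h
      exact (integrable_map_measure
        (hφc.comp (Xi_continuous τ)).aestronglyMeasurable hg.aemeasurable).mp h
    obtain ⟨x₀, hx₀⟩ := id hνm
    have hd1 : Integrable (fun q : ExtSp d × ExtSp d => dist q.1 x₀) π₀ := by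
      have h := integrable_dist_pt ν' hν'm x₀
      rw [← hπ₁] at h
      exact (integrable_map_measure
        (continuous_id.dist continuous_const).aestronglyMeasurable
        measurable_fst.aemeasurable).mp h
    have hd2 : Integrable (fun q : ExtSp d × ExtSp d => dist q.2 x₀) π₀ := by
      have h := integrable_dist_pt ν hνm x₀
      rw [← hπ₂] at h
      exact (integrable_map_measure
        (continuous_id.dist continuous_const).aestronglyMeasurable
        measurable_snd.aemeasurable).mp h
    have hπd : Integrable (fun q : ExtSp d × ExtSp d => dist q.2 q.1) π₀ := by
      refine Integrable.mono' (hd2.add hd1)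
        (continuous_snd.dist continuous_fst).aestronglyMeasurable ?_
      filter_upwards with q
      rw [Real.norm_eq_abs, abs_of_nonneg dist_nonneg]
      refine (dist_triangle q.2 x₀ q.1).trans ?_
      simp [dist_comm x₀ q.1]
    have hMd : Integrable (fun z : (ExtSp d × ExtSp d) × ((Fin d → ℝ) × ℝ) =>
        dist z.1.2 z.1.1) M := by
      have h := hπd
      rw [← hfst] at h
      exact (integrable_map_measure
        (continuous_snd.dist continuous_fst).aestronglyMeasurable
        measurable_fst.aemeasurable).mp h
    have hint2 : Integrable (fun z : (ExtSp d × ExtSp d) × ((Fin d → ℝ) × ℝ) =>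
        φ (Xi τ (z.1.1, z.2))) M := by
      refine Integrable.mono' (hint1.norm.add hMd)
        ((hφc.comp ((Xi_continuous τ).comp
          (continuous_fst.fst.prodMk continuous_snd))).aestronglyMeasurable) ?_
      filter_upwards with z
      rw [Real.norm_eq_abs]
      have key : |φ (Xi τ (z.1.1, z.2)) - φ (Xi τ (z.1.2, z.2))| ≤ dist z.1.2 z.1.1 := by
        rw [← Real.dist_eq, dist_comm z.1.2 z.1.1]
        refine (hlip _ _).trans ?_
        rw [Xi_dist_same]
      calc |φ (Xi τ (z.1.1, z.2))|
          = |φ (Xi τ (z.1.2, z.2)) + (φ (Xi τ (z.1.1, z.2)) - φ (Xi τ (z.1.2, z.2)))| := by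
            congr 1; ring
        _ ≤ |φ (Xi τ (z.1.2, z.2))| + |φ (Xi τ (z.1.1, z.2)) - φ (Xi τ (z.1.2, z.2))| :=
            abs_add_le _ _
        _ ≤ ‖φ (Xi τ (z.1.2, z.2))‖ + dist z.1.2 z.1.1 := by
            rw [Real.norm_eq_abs]
            exact add_le_add le_rfl key
    rw [← integral_sub hint1 hint2]
    have hle : (∫ z, (φ (Xi τ (z.1.2, z.2)) - φ (Xi τ (z.1.1, z.2))) ∂M)
        ≤ ∫ z, dist z.1.2 z.1.1 ∂M := by
      refine integral_mono (hint1.sub hint2) hMd fun z => ?_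
      refine (le_abs_self _).trans ?_
      rw [← Real.dist_eq]
      refine (hlip _ _).trans ?_
      rw [Xi_dist_same]
    refine hle.trans ?_
    have heq : (∫ z, dist z.1.2 z.1.1 ∂M) = ∫ q, dist q.2 q.1 ∂π₀ := by
      rw [← hfst]
      exact (integral_map measurable_fst.aemeasurable
        (continuous_snd.dist continuous_fst).aestronglyMeasurable).symm
    rw [heq,
      show (∫ q, dist q.2 q.1 ∂π₀) = ∫ q, dist q.1 q.2 ∂π₀ from
        integral_congr_ae (Filter.Eventually.of_forall fun q => dist_comm _ _),
      hopt, W1_symm ν' ν]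
  · rw [W1_symm ν ν', ← hopt]
    exact integral_nonneg fun q => dist_nonneg

end
end
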